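/- Let d ≥ 1 and let μ_H be the normalized Haar probability measure on the unitary group U(d). Then for any indices i, j ∈ Fin d, the fourth moment of a single matrix entry satisfies ∫ |U_{i j}|⁴ dμ_H(U) = 2/( d (d + 1) ). -/

import Mathlib

/-!
Left multiplication by a fixed unitary `V` preserves Haar measure, so `∫ f (U p j)` only depends
on the law of the row `p` of `V * U`. Unitaries of the form `1 + c • w wᴴ` with
`w = e_p + γ e_q` either swap rows `p` and `q` or replace row `p` by `(1 + i)/2 · (row p + η row q)`
for a unit `η`. Hence `M = ∫ ‖U i j‖⁴` is independent of `i`, and `∫ ‖U p j + η U q j‖⁴ = 4 M`;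
averaging over `η ∈ {±1, ±i}` kills the cross terms and gives `∫ ‖U p j‖² ‖U q j‖² = M / 2`
for `p ≠ q`. Integrating the square of `∑ r ‖U r j‖² = 1` then yields `d (d + 1) M / 2 = 1`.
-/

open MeasureTheory Matrix

noncomputable instance unitaryGroupMeasurableSpace {n : Type*} [Fintype n] [DecidableEq n] :
    MeasurableSpace (Matrix.unitaryGroup n ℂ) := borel _

instance unitaryGroupBorelSpace {n : Type*} [Fintype n] [DecidableEq n] :
    BorelSpace (Matrix.unitaryGroup n ℂ) := ⟨rfl⟩

theorem Continuous.integrable_of_compactSpace {X E : Type*} [TopologicalSpace X]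
    [CompactSpace X] [MeasurableSpace X] [OpensMeasurableSpace X] [NormedAddCommGroup E]
    {μ : Measure X} [IsFiniteMeasure μ] {f : X → E} (hf : Continuous f) : Integrable f μ :=
  hf.integrable_of_hasCompactSupport (HasCompactSupport.of_compactSpace f)

open Complex in
theorem Complex.sum_norm_add_mul_pow_four (a b : ℂ) :
    ∑ k : Fin 4, ‖a + ![1, -1, I, -I] k * b‖ ^ 4 =
      4 * ‖a‖ ^ 4 + 4 * ‖b‖ ^ 4 + 16 * (‖a‖ ^ 2 * ‖b‖ ^ 2) := by
  have h4 (z : ℂ) : ‖z‖ ^ 4 = normSq z ^ 2 := by rw [← Complex.sq_norm, ← pow_mul]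
  simp only [Fin.sum_univ_four, h4, ← normSq_eq_norm_sq, normSq_apply]
  simp only [Fin.isValue, cons_val_zero, one_mul, add_re, add_im, cons_val_one, neg_mul, neg_re,
    neg_im, cons_val, mul_re, I_re, zero_mul, I_im, zero_sub, mul_im, zero_add, neg_neg]
  ring

namespace Matrix

variable {n : Type*} [Fintype n] [DecidableEq n]

section RCLike

variable {𝕜 : Type*} [RCLike 𝕜]

theorem isCompact_unitaryGroup : IsCompact (unitaryGroup n 𝕜 : Set (Matrix n n 𝕜)) := by
  refine (isCompact_univ_pi fun _ => isCompact_univ_pi fun _ =>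
    isCompact_closedBall (0 : 𝕜) 1).of_isClosed_subset
      (isClosed_unitary (R := Matrix n n 𝕜)) ?_
  intro U hU i _ j _
  simpa using entry_norm_bound_of_unitary hU i j

instance : CompactSpace (unitaryGroup n 𝕜) :=
  isCompact_iff_compactSpace.mp isCompact_unitaryGroup

@[fun_prop]
theorem continuous_unitaryGroup_apply (p j : n) :
    Continuous fun U : unitaryGroup n 𝕜 => (U : Matrix n n 𝕜) p j :=
  continuous_subtype_val.matrix_elem p j

theorem sum_norm_sq_apply_of_mem_unitaryGroup {U : Matrix n n 𝕜} (hU : U ∈ unitaryGroup n 𝕜)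
    (j : n) : ∑ r, ‖U r j‖ ^ 2 = 1 := by
  have h := congrFun (congrFun ((mem_unitaryGroup_iff').mp hU) j) j
  simp only [mul_apply, star_apply, RCLike.star_def, RCLike.conj_mul, one_apply_eq] at h
  exact_mod_cast h

end RCLike

section RankOne

variable {R : Type*} [CommRing R] [StarRing R]

theorem one_add_smul_vecMulVec_star_mem_unitaryGroup (w : n → R) {c : R}
    (hc : c + star c + star c * c * (star w ⬝ᵥ w) = 0) :
    1 + c • vecMulVec w (star w) ∈ unitaryGroup n R := by
  have hP : star (vecMulVec w (star w)) = vecMulVec w (star w) := by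
    rw [star_eq_conjTranspose, conjTranspose_vecMulVec, star_star]
  have hPP : vecMulVec w (star w) * vecMulVec w (star w) =
      (star w ⬝ᵥ w) • vecMulVec w (star w) := by
    rw [vecMulVec_mul_vecMulVec, vecMulVec_smul]
  rw [mem_unitaryGroup_iff']
  simp only [star_add, star_one, star_smul, hP, add_mul, mul_add, one_mul, mul_one,
    smul_mul_smul_comm, hPP, smul_smul, add_assoc, ← add_smul]
  rw [← add_assoc, add_comm (star c), hc, zero_smul, add_zero]

theorem one_add_smul_vecMulVec_mul_apply (w : n → R) (c : R) (U : Matrix n n R) (r k : n) :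
    ((1 + c • vecMulVec w (star w)) * U) r k = U r k + c * w r * (star w ᵥ* U) k := by
  simp [add_mul, vecMulVec_mul, vecMulVec_apply, mul_assoc]

theorem exists_mem_unitaryGroup_row_mul_eq {p q : n} (hpq : p ≠ q) {c γ : R}
    (hc : c + star c + star c * c * (1 + star γ * γ) = 0) :
    ∃ V ∈ unitaryGroup n R, ∀ (U : Matrix n n R) (k : n),
      (V * U) p k = (1 + c) * U p k + c * star γ * U q k := by
  set w : n → R := Pi.single p 1 + γ • Pi.single q 1
  have hw : star w ⬝ᵥ w = 1 + star γ * γ := by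
    simp [w, dotProduct_add, hpq, hpq.symm, mul_comm γ]
  refine ⟨_, one_add_smul_vecMulVec_star_mem_unitaryGroup w (hw ▸ hc), fun U k => ?_⟩
  rw [one_add_smul_vecMulVec_mul_apply]
  simp only [Pi.add_apply, Pi.single_eq_same, Pi.smul_apply, ne_eq, hpq, not_false_eq_true,
    Pi.single_eq_of_ne, smul_eq_mul, mul_zero, add_zero, mul_one, star_add, Pi.star_single,
    star_one, star_smul, add_vecMul, single_vecMul, one_smul, smul_vecMul, row_apply, w]
  ring

theorem exists_mem_unitaryGroup_row_mul_eq_row {p q : n} (hpq : p ≠ q) :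
    ∃ V ∈ unitaryGroup n R, ∀ (U : Matrix n n R) (k : n), (V * U) p k = U q k := by
  obtain ⟨V, hV, hrow⟩ := exists_mem_unitaryGroup_row_mul_eq (R := R) (c := -1) (γ := -1) hpq
    (by simp only [star_neg, star_one]; ring)
  exact ⟨V, hV, fun U k => by rw [hrow]; simp⟩

end RankOne

open Complex ComplexConjugate in
theorem exists_mem_unitaryGroup_row_mul_eq_add_mul {p q : n} (hpq : p ≠ q) {η : ℂ}
    (hη : ‖η‖ = 1) :
    ∃ V ∈ unitaryGroup n ℂ, ∀ (U : Matrix n n ℂ) (k : n),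
      (V * U) p k = (1 + I) / 2 * (U p k + η * U q k) := by
  have hηη : η * conj η = 1 := by rw [mul_conj, normSq_eq_norm_sq, hη]; norm_num
  have hγ : star (I * conj η) * (I * conj η) = 1 := by
    rw [star_def, map_mul, conj_I, conj_conj]
    linear_combination hηη - η * conj η * I_sq
  -- For `‖w‖² = 2`, `1 + c • w wᴴ` is unitary iff `‖1 + 2 c‖ = 1`; `c = (i - 1) / 2` is the
  -- solution that also has `‖1 + c‖ = ‖c‖`.
  obtain ⟨V, hV, hrow⟩ := exists_mem_unitaryGroup_row_mul_eq (c := (I - 1) / 2) hpq (by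
    rw [hγ]
    simp only [star_def, map_div₀, map_sub, conj_I, map_one, map_ofNat]
    linear_combination (-1 / 2 : ℂ) * I_sq)
  refine ⟨V, hV, fun U k => ?_⟩
  rw [hrow]
  simp only [star_mul', RCLike.star_def, conj_I, RingHomCompTriple.comp_apply, RingHom.id_apply,
    neg_mul, mul_neg]
  linear_combination (-η * U q k / 2) * I_sq

section Moments

variable (μ : Measure (unitaryGroup n ℂ)) [μ.IsMulLeftInvariant]

theorem integral_comp_apply_eq (f : ℂ → ℝ) (p q j : n) :
    ∫ U, f ((U : Matrix n n ℂ) p j) ∂μ = ∫ U, f ((U : Matrix n n ℂ) q j) ∂μ := by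
  rcases eq_or_ne p q with rfl | hpq
  · rfl
  obtain ⟨V, hV, hrow⟩ := exists_mem_unitaryGroup_row_mul_eq_row (R := ℂ) hpq
  rw [← integral_mul_left_eq_self _ (⟨V, hV⟩ : unitaryGroup n ℂ)]
  simp only [Submonoid.coe_mul, hrow]

open Complex in
theorem integral_norm_add_mul_pow_four {p q : n} (hpq : p ≠ q) {η : ℂ} (hη : ‖η‖ = 1) (j : n) :
    ∫ U, ‖(U : Matrix n n ℂ) p j + η * (U : Matrix n n ℂ) q j‖ ^ 4 ∂μ =
      4 * ∫ U, ‖(U : Matrix n n ℂ) p j‖ ^ 4 ∂μ := by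
  obtain ⟨V, hV, hrow⟩ := exists_mem_unitaryGroup_row_mul_eq_add_mul hpq hη
  have hnorm : ‖(1 + I) / 2‖ ^ 4 = 1 / 4 := by
    rw [show (4 : ℕ) = 2 * 2 from rfl, pow_mul, Complex.sq_norm]
    norm_num [normSq_apply]
  have hinv := integral_mul_left_eq_self (μ := μ) (fun U => ‖(U : Matrix n n ℂ) p j‖ ^ 4)
    ⟨V, hV⟩
  simp only [Submonoid.coe_mul, hrow, norm_mul, mul_pow, hnorm, integral_const_mul] at hinv
  linarith

open Complex in
theorem integral_sq_norm_mul_sq_norm_of_ne [IsFiniteMeasure μ] {p q : n} (hpq : p ≠ q) (j : n) :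
    ∫ U, ‖(U : Matrix n n ℂ) p j‖ ^ 2 * ‖(U : Matrix n n ℂ) q j‖ ^ 2 ∂μ =
      (∫ U, ‖(U : Matrix n n ℂ) p j‖ ^ 4 ∂μ) / 2 := by
  set M := ∫ U, ‖(U : Matrix n n ℂ) p j‖ ^ 4 ∂μ
  have hint {f : unitaryGroup n ℂ → ℝ} (hf : Continuous f) : Integrable f μ :=
    hf.integrable_of_compactSpace
  have hphase (k : Fin 4) : ‖![1, -1, I, -I] k‖ = 1 := by fin_cases k <;> simp
  have hmix : ∫ U, ∑ k : Fin 4,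
      ‖(U : Matrix n n ℂ) p j + ![1, -1, I, -I] k * (U : Matrix n n ℂ) q j‖ ^ 4 ∂μ = 16 * M := by
    rw [integral_finsetSum _ fun k _ => hint (by fun_prop)]
    simp only [integral_norm_add_mul_pow_four μ hpq (hphase _), Finset.sum_const,
      Finset.card_univ, Fintype.card_fin, nsmul_eq_mul]
    ring
  have hrow : ∫ U, ‖(U : Matrix n n ℂ) q j‖ ^ 4 ∂μ = M :=
    integral_comp_apply_eq μ (‖·‖ ^ 4) q p j
  simp only [Complex.sum_norm_add_mul_pow_four] at hmix
  rw [integral_add (hint (by fun_prop)) (hint (by fun_prop)),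
    integral_add (hint (by fun_prop)) (hint (by fun_prop)), integral_const_mul,
    integral_const_mul, integral_const_mul, hrow] at hmix
  linarith

theorem integral_sq_norm_mul_sq_norm [IsFiniteMeasure μ] (r s i j : n) :
    ∫ U, ‖(U : Matrix n n ℂ) r j‖ ^ 2 * ‖(U : Matrix n n ℂ) s j‖ ^ 2 ∂μ =
      (1 / 2 + if r = s then 1 / 2 else 0) * ∫ U, ‖(U : Matrix n n ℂ) i j‖ ^ 4 ∂μ := by
  rw [integral_comp_apply_eq μ (‖·‖ ^ 4) i r j]
  split_ifs with hrs
  · subst hrs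
    simp_rw [← pow_add]
    ring
  · rw [integral_sq_norm_mul_sq_norm_of_ne μ hrs]
    ring

theorem card_mul_card_add_one_mul_integral_norm_pow_four [IsProbabilityMeasure μ] (i j : n) :
    (Fintype.card n : ℝ) * (Fintype.card n + 1) * ∫ U, ‖(U : Matrix n n ℂ) i j‖ ^ 4 ∂μ = 2 := by
  have hint (r s : n) : Integrable (fun U : unitaryGroup n ℂ =>
      ‖(U : Matrix n n ℂ) r j‖ ^ 2 * ‖(U : Matrix n n ℂ) s j‖ ^ 2) μ :=
    (by fun_prop : Continuous _).integrable_of_compactSpace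
  have hcol : ∫ U, ∑ r, ∑ s, ‖(U : Matrix n n ℂ) r j‖ ^ 2 * ‖(U : Matrix n n ℂ) s j‖ ^ 2 ∂μ
      = 1 := by
    simp [← Finset.sum_mul_sum, sum_norm_sq_apply_of_mem_unitaryGroup]
  rw [integral_finsetSum _ fun r _ => integrable_finsetSum _ fun s _ => hint r s] at hcol
  simp_rw [integral_finsetSum _ fun s _ => hint _ s, integral_sq_norm_mul_sq_norm μ _ _ i j,
    ← Finset.sum_mul, Finset.sum_add_distrib, Finset.sum_ite_eq, Finset.sum_const] at hcol
  simp only [Finset.card_univ, one_div, nsmul_eq_mul, Finset.mem_univ, ↓reduceIte,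
    Finset.sum_const] at hcol
  linear_combination 2 * hcol

end Moments

end Matrix

theorem fourth_moment_haar_unitary_single_entry_general
    (d : ℕ)
    (μH : Measure (Matrix.unitaryGroup (Fin d) ℂ))
    [μH.IsHaarMeasure] [IsProbabilityMeasure μH]
    (i j : Fin d) :
    ∫ U : Matrix.unitaryGroup (Fin d) ℂ,
        ‖(U : Matrix (Fin d) (Fin d) ℂ) i j‖ ^ 4 ∂μH
      = 2 / ((d : ℝ) * ((d : ℝ) + 1)) := by
  have h := card_mul_card_add_one_mul_integral_norm_pow_four μH i j
  rw [Fintype.card_fin] at h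
  refine eq_div_of_mul_eq (fun h0 => ?_) (by rw [mul_comm, h])
  rw [h0, zero_mul] at h
  norm_num at h

/-- **Fourth moment of a single Haar-unitary matrix entry.** For `d ≥ 1` and any
indices `i, j`, `∫ |U_{i j}|⁴ dμ_H(U) = 2/(d(d+1))`. -/
theorem fourth_moment_haar_unitary_single_entry
    (d : ℕ) (hd : 1 ≤ d)
    (μH : Measure (Matrix.unitaryGroup (Fin d) ℂ))
    [μH.IsHaarMeasure] [IsProbabilityMeasure μH]
    (i j : Fin d) :
    ∫ U : Matrix.unitaryGroup (Fin d) ℂ,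
        ‖(U : Matrix (Fin d) (Fin d) ℂ) i j‖ ^ 4 ∂μH
      = 2 / ((d : ℝ) * ((d : ℝ) + 1)) :=
  fourth_moment_haar_unitary_single_entry_general d μH i j
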